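/- For all integers n, k ≥ 1, Σ_{t=k}^{kn} B(t,n,k) = C(n,k), where B(t,n,k) is the number of n-tuples (T₁,…,T_n) of k-element subsets of [t] = {1,…,t} with T₁ ∪ ⋯ ∪ T_n = [t], and C(n,k) is the number of pairs (t, (B₁,…,B_t)) consisting of an integer t ≥ 1 and a t-tuple of nonempty subsets of [n] = {1,…,n} such that every a ∈ [n] belongs to exactly k of the blocks B_j. -/

import Mathlib

/-!
Transposing the incidence relation `j ∈ T a` turns an `n`-tuple `(T₁,…,T_n)` of `k`-subsets of
`[t]` covering `[t]` into a `t`-tuple `(B₁,…,B_t)` of nonempty subsets of `[n]` in which every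
`a ∈ [n]` lies in exactly `k` blocks, and back. Such a block tuple forces `k ≤ t ≤ kn`: some
element lies in `k` of the `t` blocks, and the `t` nonempty blocks have `kn` elements in total.
-/

/-- `B(t,n,k)`: the number of `n`-tuples `(T₁,…,T_n)` of `k`-element (not necessarily
disjoint) subsets of `[t]` with `T₁ ∪ ⋯ ∪ T_n = [t]`. -/
def Bcover (t n k : ℕ) : ℕ :=
  (Finset.univ.filter (fun T : Fin n → Finset (Fin t) =>
    (∀ i, (T i).card = k) ∧ Finset.univ.biUnion T = Finset.univ)).card

/-- `C(n,k)`: the number of pairs `(t, (B₁,…,B_t))` consisting of an integer `t ≥ 1` and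
a `t`-tuple of nonempty subsets of `[n]` such that every `a ∈ [n]` belongs to exactly
`k` of the blocks (ordered partitions of the multiset `{1^k,…,n^k}` into nonempty
subsets of `[n]`). -/
noncomputable def Ccount (n k : ℕ) : ℕ :=
  Nat.card ((t : ℕ) × {B : Fin t → Finset (Fin n) //
    1 ≤ t ∧ (∀ j, (B j).Nonempty) ∧
    ∀ a : Fin n, (Finset.univ.filter (fun j => a ∈ B j)).card = k})

open Finset

section Transpose

variable {α β : Type*} [Fintype α] [DecidableEq β]

def transposeFamily (T : α → Finset β) (b : β) : Finset α :=
  univ.filter fun a => b ∈ T a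

@[simp]
lemma mem_transposeFamily {T : α → Finset β} {a : α} {b : β} :
    a ∈ transposeFamily T b ↔ b ∈ T a := by
  simp [transposeFamily]

@[simp]
lemma transposeFamily_transposeFamily [Fintype β] [DecidableEq α] (T : α → Finset β) :
    transposeFamily (transposeFamily T) = T := by
  ext a b
  simp

def transposeFamilyEquiv [Fintype β] [DecidableEq α] : (α → Finset β) ≃ (β → Finset α) where
  toFun := transposeFamily
  invFun := transposeFamily
  left_inv := transposeFamily_transposeFamily
  right_inv := transposeFamily_transposeFamily

lemma transposeFamily_nonempty_iff {T : α → Finset β} {b : β} :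
    (transposeFamily T b).Nonempty ↔ b ∈ univ.biUnion T := by
  simp [Finset.Nonempty]

lemma sum_card_transposeFamily [Fintype β] (T : α → Finset β) :
    ∑ b, #(transposeFamily T b) = ∑ a, #(T a) := by
  have := sum_card_bipartiteAbove_eq_sum_card_bipartiteBelow (s := univ) (t := univ)
    (r := fun a b => b ∈ T a)
  simp only [bipartiteAbove, bipartiteBelow, filter_mem_eq_inter, univ_inter] at this
  exact this.symm

end Transpose

def blockTuples (n k t : ℕ) : Finset (Fin t → Finset (Fin n)) :=
  univ.filter fun B => (∀ j, (B j).Nonempty) ∧ ∀ a, #(transposeFamily B a) = k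

lemma bcover_eq_card_blockTuples (t n k : ℕ) : Bcover t n k = #(blockTuples n k t) := by
  refine card_equiv transposeFamilyEquiv fun T => ?_
  simp only [blockTuples, mem_filter, mem_univ, true_and, transposeFamilyEquiv,
    Equiv.coe_fn_mk, transposeFamily_transposeFamily, transposeFamily_nonempty_iff,
    eq_univ_iff_forall]
  exact and_comm

variable {n k t : ℕ} {B : Fin t → Finset (Fin n)}

lemma mem_blockTuples :
    B ∈ blockTuples n k t ↔ (∀ j, (B j).Nonempty) ∧ ∀ a, #(transposeFamily B a) = k := by
  simp [blockTuples]

lemma le_of_mem_blockTuples (hB : B ∈ blockTuples n k t) (ht : 0 < t) : k ≤ t := by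
  obtain ⟨hne, hcount⟩ := mem_blockTuples.mp hB
  obtain ⟨a, ha⟩ := hne ⟨0, ht⟩
  calc k = #(transposeFamily B a) := (hcount a).symm
    _ ≤ t := card_le_univ _ |>.trans_eq (Fintype.card_fin t)

lemma le_mul_of_mem_blockTuples (hB : B ∈ blockTuples n k t) : t ≤ k * n := by
  obtain ⟨hne, hcount⟩ := mem_blockTuples.mp hB
  calc t = ∑ _j : Fin t, 1 := by simp
    _ ≤ ∑ j, #(B j) := sum_le_sum fun j _ => card_pos.mpr (hne j)
    _ = ∑ a, #(transposeFamily B a) := (sum_card_transposeFamily B).symm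
    _ = k * n := by simp [hcount, mul_comm]

lemma ccount_eq_sum_card_blockTuples (hk : 1 ≤ k) :
    Ccount n k = ∑ t ∈ Icc k (k * n), #(blockTuples n k t) := by
  let F t := {B : Fin t → Finset (Fin n) // 1 ≤ t ∧ B ∈ blockTuples n k t}
  have hF t : F t → t ∈ Icc k (k * n) := fun ⟨_, ht, hB⟩ =>
    mem_Icc.mpr ⟨le_of_mem_blockTuples hB ht, le_mul_of_mem_blockTuples hB⟩
  have hCcount : Ccount n k = Nat.card (Σ t, F t) := by
    refine Nat.card_congr (Equiv.sigmaCongrRight fun t => Equiv.subtypeEquivRight fun B => ?_)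
    exact and_congr_right' mem_blockTuples.symm
  rw [hCcount, ← Nat.card_congr (Equiv.sigmaSubtypeEquivOfSubset F _ hF), Nat.card_sigma,
    sum_coe_sort (Icc k (k * n)) fun t => Nat.card (F t)]
  refine sum_congr rfl fun t ht => ?_
  have h1t : 1 ≤ t := hk.trans (mem_Icc.mp ht).1
  rw [← Nat.card_eq_finsetCard]
  exact Nat.card_congr (Equiv.subtypeEquivRight fun B => and_iff_right h1t)

theorem stmt19_general (n k : ℕ) (hk : 1 ≤ k) :
    ∑ t ∈ Finset.Icc k (k * n), Bcover t n k = Ccount n k := by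
  simp only [ccount_eq_sum_card_blockTuples hk, bcover_eq_card_blockTuples]

/-- For `n, k ≥ 1`, `Σ_{t=k}^{kn} B(t,n,k) = C(n,k)`. -/
theorem stmt19 (n k : ℕ) (hn : 1 ≤ n) (hk : 1 ≤ k) :
    ∑ t ∈ Finset.Icc k (k * n), Bcover t n k = Ccount n k :=
  stmt19_general n k hk
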